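/- Let a₁ ≤ a₂ ≤ ⋯ ≤ aₙ < 0 and consider on ℝ^{n+1} = ℝ × ℝⁿ, with coordinates (s, y₁, …, yₙ), the Riemannian metric g = ds² + e^{2a₁s}|dy₁|² + ⋯ + e^{2aₙs}|dyₙ|². Then (ℝ^{n+1}, g) is a Cartan–Hadamard manifold (complete, simply connected, nonpositively curved) whose sectional curvature K is pinched between −(maxᵢ aᵢ²) and −(minᵢ aᵢ²); in particular it has strictly negative sectional curvature. -/

import Mathlib

noncomputable section

open Filter

/-! Generic Riemannian geometry of a metric tensor on `ℝ^d`, given by its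
matrix of coefficients `G p i j = g_p(∂_i, ∂_j)` in the standard coordinates:
partial derivatives, Christoffel symbols, curvature tensor, sectional
curvature, lengths of paths, Riemannian distance, geodesics and parallel
vector fields. -/

/-- partial derivative of `f` in the `k`-th coordinate direction -/
def pder {d : ℕ} (f : (Fin d → ℝ) → ℝ) (k : Fin d) (p : Fin d → ℝ) : ℝ :=
  fderiv ℝ f p (Pi.single k 1)

/-- the value `g_p(X,Y)` of the metric tensor `G` at `p` on two tangent
vectors -/
def gprod {d : ℕ} (G : (Fin d → ℝ) → Matrix (Fin d) (Fin d) ℝ)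
    (p X Y : Fin d → ℝ) : ℝ :=
  ∑ i, ∑ j, G p i j * X i * Y j

/-- Christoffel symbols `Γ^l_{ij}` of the Levi-Civita connection of `G` -/
def christoffel {d : ℕ} (G : (Fin d → ℝ) → Matrix (Fin d) (Fin d) ℝ)
    (p : Fin d → ℝ) (l i j : Fin d) : ℝ :=
  (1 / 2) * ∑ k, (G p)⁻¹ l k *
    (pder (fun q => G q k j) i p + pder (fun q => G q i k) j p -
      pder (fun q => G q i j) k p)

/-- components `R^l_{kij}` of the Riemann curvature tensor of `G`, so that
`R(∂_i,∂_j)∂_k = ∑_l R^l_{kij} ∂_l` -/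
def riemann {d : ℕ} (G : (Fin d → ℝ) → Matrix (Fin d) (Fin d) ℝ)
    (p : Fin d → ℝ) (l k i j : Fin d) : ℝ :=
  pder (fun q => christoffel G q l j k) i p -
    pder (fun q => christoffel G q l i k) j p +
    ∑ m, (christoffel G p l i m * christoffel G p m j k -
      christoffel G p l j m * christoffel G p m i k)

/-- the curvature operator: the vector `R(u,v)w` -/
def curvVec {d : ℕ} (G : (Fin d → ℝ) → Matrix (Fin d) (Fin d) ℝ)
    (p u v w : Fin d → ℝ) : Fin d → ℝ :=
  fun l => ∑ i, ∑ j, ∑ k, u i * v j * w k * riemann G p l k i j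

/-- sectional curvature of `G` at `p` for the plane spanned by `u` and `v`:
`K(u,v) = g(R(u,v)v, u) / (g(u,u)g(v,v) - g(u,v)²)` -/
def sectional {d : ℕ} (G : (Fin d → ℝ) → Matrix (Fin d) (Fin d) ℝ)
    (p u v : Fin d → ℝ) : ℝ :=
  gprod G p (curvVec G p u v v) u /
    (gprod G p u u * gprod G p v v - gprod G p u v ^ 2)

/-- Riemannian length of the path `c : [0,1] → ℝ^d` for the metric `G` -/
def pathLength {d : ℕ} (G : (Fin d → ℝ) → Matrix (Fin d) (Fin d) ℝ)
    (c : ℝ → Fin d → ℝ) : ℝ :=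
  ∫ t in (0:ℝ)..1, Real.sqrt (gprod G (c t) (deriv c t) (deriv c t))

/-- Riemannian distance for the metric `G`: the infimum of the lengths of
`C¹` paths joining the two points -/
def riemDist {d : ℕ} (G : (Fin d → ℝ) → Matrix (Fin d) (Fin d) ℝ)
    (p q : Fin d → ℝ) : ℝ :=
  sInf {L | ∃ c : ℝ → Fin d → ℝ,
    ContDiff ℝ 1 c ∧ c 0 = p ∧ c 1 = q ∧ pathLength G c = L}

/-- `c` is a geodesic of the metric `G`: it satisfies the geodesic equation
`c̈^l + Γ^l_{ij}(c) ċ^i ċ^j = 0` -/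
def IsGeodesic {d : ℕ} (G : (Fin d → ℝ) → Matrix (Fin d) (Fin d) ℝ)
    (c : ℝ → Fin d → ℝ) : Prop :=
  ∀ (t : ℝ) (l : Fin d), deriv (fun u => deriv c u l) t +
    ∑ i, ∑ j, christoffel G (c t) l i j * deriv c t i * deriv c t j = 0

/-- `V` is a `G`-parallel vector field along the path `c`:
`V̇^l + Γ^l_{ij}(c) ċ^i V^j = 0` -/
def IsParallel {d : ℕ} (G : (Fin d → ℝ) → Matrix (Fin d) (Fin d) ℝ)
    (c V : ℝ → Fin d → ℝ) : Prop :=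
  ∀ (t : ℝ) (l : Fin d), deriv (fun u => V u l) t +
    ∑ i, ∑ j, christoffel G (c t) l i j * deriv c t i * V t j = 0

/-- the Heintze metric: the left-invariant metric
`g = ds² + e^{2a₁s}|dy₁|² + ⋯ + e^{2aₙs}|dyₙ|²` of the Heintze group
`G_A = ℝ ⋉_A ℝⁿ`, `A = diag(a₁,…,aₙ)`, on `ℝ^{n+1} = ℝ × ℝⁿ` (coordinate
`0` being `s` and coordinate `i+1` being `yᵢ`) -/
def heintzeG {n : ℕ} (a : Fin n → ℝ) :
    (Fin (n + 1) → ℝ) → Matrix (Fin (n + 1)) (Fin (n + 1)) ℝ :=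
  fun p => Matrix.diagonal (Fin.cases 1 fun j => Real.exp (2 * a j * p 0))

/-!
In the coordinates `x = (s, y)` the metric is diagonal, `g = ∑_α e^{2 b_α s} dx_α²` with
`b = (0, a₁, …, aₙ)` (`Heintze.rate`), and depends on `s` only. Its Christoffel symbols and
curvature tensor then have closed forms, and the coordinate planes diagonalise the curvature:
`K(∂_α, ∂_β) = −q_{αβ}` with `q_{0j} = q_{j0} = a_j²` and `q_{ij} = a_i a_j` (`Heintze.curv`).
By Lagrange's identity the sectional curvature of the plane `u ∧ v` is then minus the mean of
the `q_{αβ}`, `α ≠ β`, weighted by `e^{2 b_α s} e^{2 b_β s} (u_α v_β − u_β v_α)²`; as all `a_i`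
have the same sign, each `q_{αβ}` lies between `minᵢ aᵢ²` and `maxᵢ aᵢ²`.

Completeness: `g ≥ ds²`, so `s` is `1`-Lipschitz for the Riemannian distance and stays
bounded along a Cauchy sequence. Since the coefficients `e^{2 aᵢ s}` decrease in `s`, short paths
between far-out terms of the sequence then also control the `yᵢ`-displacements, so the sequence
converges coordinatewise; comparing with straight segments shows that it converges for the
Riemannian distance too.
-/

open Set Topology

theorem sum_sum_mul_sub_sq_eq {R ι : Type*} [CommRing R] [Fintype ι] (c : ι → ι → R)
    (hc : ∀ i j, c i j = c j i) (u v : ι → R) :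
    ∑ i, ∑ j, c i j * (u i * v j - u j * v i) ^ 2 =
      2 * ∑ i, ∑ j, c i j * (u i ^ 2 * v j ^ 2 - u i * v i * (u j * v j)) := by
  set f : ι → ι → R := fun i j => c i j * (u i ^ 2 * v j ^ 2 - u i * v i * (u j * v j))
  have hsq : ∀ i j, c i j * (u i * v j - u j * v i) ^ 2 = f i j + f j i := by
    intro i j
    simp only [f, hc j i]
    ring
  simp only [hsq, Finset.sum_add_distrib]
  rw [Finset.sum_comm (f := fun i j => f j i)]
  ring

theorem div_sum_mem_Icc_of_forall_mem {ι : Type*} (s : Finset ι) {q ω : ι → ℝ} {m M : ℝ}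
    (hω : ∀ i ∈ s, 0 ≤ ω i) (hq : ∀ i ∈ s, ω i ≠ 0 → q i ∈ Icc m M)
    (hpos : 0 < ∑ i ∈ s, ω i) :
    (∑ i ∈ s, q i * ω i) / ∑ i ∈ s, ω i ∈ Icc m M := by
  have hbound : ∀ i ∈ s, m * ω i ≤ q i * ω i ∧ q i * ω i ≤ M * ω i := by
    intro i hi
    rcases eq_or_ne (ω i) 0 with h | h
    · simp [h]
    · exact ⟨mul_le_mul_of_nonneg_right (hq i hi h).1 (hω i hi),
        mul_le_mul_of_nonneg_right (hq i hi h).2 (hω i hi)⟩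
  rw [mem_Icc, le_div_iff₀ hpos, div_le_iff₀ hpos, Finset.mul_sum, Finset.mul_sum]
  exact ⟨Finset.sum_le_sum fun i hi => (hbound i hi).1,
    Finset.sum_le_sum fun i hi => (hbound i hi).2⟩

theorem exists_mul_sub_mul_ne_zero {ι : Type*} {u v : ι → ℝ}
    (h : LinearIndependent ℝ ![u, v]) : ∃ i j, u i * v j - u j * v i ≠ 0 := by
  by_contra! hw
  have hv : v = 0 := funext fun j => by
    have := (LinearIndependent.pair_iff.1 h (v j) (-u j) (funext fun i => by
      simp only [Pi.add_apply, Pi.smul_apply, smul_eq_mul, Pi.zero_apply]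
      linarith [hw i j])).1
    simpa using this
  exact one_ne_zero (LinearIndependent.pair_iff.1 h 0 1 (by simp [hv])).2

lemma pder_const_mul_exp {d : ℕ} (c e : ℝ) (j k : Fin d) (p : Fin d → ℝ) :
    pder (fun q => e * Real.exp (c * q j)) k p =
      if k = j then e * c * Real.exp (c * p j) else 0 := by
  have hs : HasFDerivAt (fun q : Fin d → ℝ => c * q j)
      (c • ContinuousLinearMap.proj (R := ℝ) (φ := fun _ : Fin d => ℝ) j) p :=
    (hasFDerivAt_apply j p).const_mul c
  rw [pder, (hs.exp.const_mul e).fderiv]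
  by_cases hk : k = j
  · subst hk
    simp only [smul_apply, ContinuousLinearMap.proj_apply, Pi.single_eq_same, smul_eq_mul,
      mul_one, if_true]
    ring
  · simp [hk]

section RiemDist

variable {d : ℕ} (G : (Fin d → ℝ) → Matrix (Fin d) (Fin d) ℝ)

lemma pathLength_nonneg (c : ℝ → Fin d → ℝ) : 0 ≤ pathLength G c :=
  intervalIntegral.integral_nonneg zero_le_one fun _ _ => Real.sqrt_nonneg _

lemma contDiff_segment (p q : Fin d → ℝ) : ContDiff ℝ 1 fun t : ℝ => p + t • (q - p) := by
  fun_prop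

lemma deriv_segment (p q : Fin d → ℝ) (t : ℝ) :
    deriv (fun t : ℝ => p + t • (q - p)) t = q - p := by
  simpa using (((hasDerivAt_id t).smul_const (q - p)).const_add p).deriv

lemma riemDist_le_pathLength {c : ℝ → Fin d → ℝ} (hc : ContDiff ℝ 1 c) :
    riemDist G (c 0) (c 1) ≤ pathLength G c :=
  csInf_le ⟨0, by rintro _ ⟨c', -, -, -, rfl⟩; exact pathLength_nonneg G c'⟩ ⟨c, hc, rfl, rfl, rfl⟩

lemma riemDist_lengths_nonempty (p q : Fin d → ℝ) :
    {L | ∃ c : ℝ → Fin d → ℝ, ContDiff ℝ 1 c ∧ c 0 = p ∧ c 1 = q ∧ pathLength G c = L}.Nonempty :=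
  ⟨_, _, contDiff_segment p q, by simp, by simp, rfl⟩

lemma le_riemDist {p q : Fin d → ℝ} {B : ℝ}
    (h : ∀ c, ContDiff ℝ 1 c → c 0 = p → c 1 = q → B ≤ pathLength G c) :
    B ≤ riemDist G p q :=
  le_csInf (riemDist_lengths_nonempty G p q) (by rintro _ ⟨c, hc, h0, h1, rfl⟩; exact h c hc h0 h1)

lemma riemDist_nonneg (p q : Fin d → ℝ) : 0 ≤ riemDist G p q :=
  le_riemDist G fun c _ _ _ => pathLength_nonneg G c

lemma exists_pathLength_lt {p q : Fin d → ℝ} {L : ℝ} (h : riemDist G p q < L) :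
    ∃ c, ContDiff ℝ 1 c ∧ c 0 = p ∧ c 1 = q ∧ pathLength G c < L := by
  obtain ⟨_, ⟨c, hc, h0, h1, rfl⟩, hlt⟩ :=
    exists_lt_of_csInf_lt (riemDist_lengths_nonempty G p q) h
  exact ⟨c, hc, h0, h1, hlt⟩

variable {G}

lemma continuous_speed (hG : Continuous G) {c : ℝ → Fin d → ℝ} (hc : ContDiff ℝ 1 c) :
    Continuous fun t => Real.sqrt (gprod G (c t) (deriv c t) (deriv c t)) := by
  have hc₀ := hc.continuous
  have hc₁ := hc.continuous_deriv le_rfl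
  unfold gprod
  fun_prop

lemma mul_abs_sub_le_pathLength (hG : Continuous G) {c : ℝ → Fin d → ℝ} (hc : ContDiff ℝ 1 c)
    {κ : ℝ} (hκ : 0 ≤ κ) (α : Fin d)
    (hspeed : ∀ τ ∈ Icc (0 : ℝ) 1,
      κ * |deriv c τ α| ≤ Real.sqrt (gprod G (c τ) (deriv c τ) (deriv c τ)))
    {t : ℝ} (ht : t ∈ Icc (0 : ℝ) 1) :
    κ * |c t α - c 0 α| ≤ pathLength G c := by
  have hderiv : Continuous fun τ => deriv c τ α :=
    (continuous_apply α).comp (hc.continuous_deriv le_rfl)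
  have hftc : ∫ τ in (0 : ℝ)..t, deriv c τ α = c t α - c 0 α :=
    intervalIntegral.integral_eq_sub_of_hasDerivAt
      (fun τ _ => (hasFDerivAt_apply α (c τ)).comp_hasDerivAt τ
        ((hc.differentiable one_ne_zero) τ).hasDerivAt)
      (hderiv.intervalIntegrable 0 t)
  calc κ * |c t α - c 0 α|
      ≤ κ * ∫ τ in (0 : ℝ)..t, |deriv c τ α| := by
        rw [← hftc]
        exact mul_le_mul_of_nonneg_left (intervalIntegral.abs_integral_le_integral_abs ht.1) hκ
    _ = ∫ τ in (0 : ℝ)..t, κ * |deriv c τ α| := (intervalIntegral.integral_const_mul _ _).symm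
    _ ≤ ∫ τ in (0 : ℝ)..t, Real.sqrt (gprod G (c τ) (deriv c τ) (deriv c τ)) :=
        intervalIntegral.integral_mono_on ht.1
          ((continuous_const.mul hderiv.abs).intervalIntegrable 0 t)
          ((continuous_speed hG hc).intervalIntegrable 0 t)
          fun τ hτ => hspeed τ ⟨hτ.1, hτ.2.trans ht.2⟩
    _ ≤ pathLength G c :=
        intervalIntegral.integral_mono_interval le_rfl ht.1 ht.2
          (Eventually.of_forall fun _ => Real.sqrt_nonneg _)
          ((continuous_speed hG hc).intervalIntegrable 0 1)

lemma riemDist_le_of_segment (hG : Continuous G) {p q : Fin d → ℝ} {B : ℝ}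
    (h : ∀ t ∈ Icc (0 : ℝ) 1, Real.sqrt (gprod G (p + t • (q - p)) (q - p) (q - p)) ≤ B) :
    riemDist G p q ≤ B := by
  have hc := contDiff_segment p q
  calc riemDist G p q ≤ pathLength G fun t : ℝ => p + t • (q - p) := by
        simpa using riemDist_le_pathLength G hc
    _ ≤ ∫ _ in (0 : ℝ)..1, B := by
        refine intervalIntegral.integral_mono_on zero_le_one
          ((continuous_speed hG hc).intervalIntegrable 0 1) intervalIntegrable_const ?_
        simpa only [deriv_segment] using h
    _ = B := by simp

end RiemDist

namespace Heintze

section Curvature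

variable {n : ℕ} (a : Fin n → ℝ)

def rate : Fin (n + 1) → ℝ := Fin.cases 0 a

def coeff (α : Fin (n + 1)) (s : ℝ) : ℝ := Real.exp (2 * rate a α * s)

@[simp] lemma rate_zero : rate a 0 = 0 := rfl

@[simp] lemma rate_succ (j : Fin n) : rate a j.succ = a j := rfl

@[simp] lemma coeff_zero (s : ℝ) : coeff a 0 s = 1 := by simp [coeff]

lemma coeff_pos (α : Fin (n + 1)) (s : ℝ) : 0 < coeff a α s := Real.exp_pos _

lemma heintzeG_eq_diagonal (p : Fin (n + 1) → ℝ) :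
    heintzeG a p = Matrix.diagonal fun α => coeff a α (p 0) := by
  rw [heintzeG]
  congr 1
  funext α
  induction α using Fin.cases <;> simp [coeff]

lemma heintzeG_apply (p : Fin (n + 1) → ℝ) (i j : Fin (n + 1)) :
    heintzeG a p i j = if i = j then coeff a i (p 0) else 0 := by
  rw [heintzeG_eq_diagonal, Matrix.diagonal_apply]

lemma heintzeG_inv (p : Fin (n + 1) → ℝ) :
    (heintzeG a p)⁻¹ = Matrix.diagonal fun α => (coeff a α (p 0))⁻¹ := by
  refine Matrix.inv_eq_right_inv ?_
  rw [heintzeG_eq_diagonal, Matrix.diagonal_mul_diagonal, ← Matrix.diagonal_one]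
  exact congrArg _ (funext fun α => mul_inv_cancel₀ (coeff_pos a α _).ne')

lemma continuous_heintzeG : Continuous (heintzeG a) := by
  refine continuous_pi fun i => continuous_pi fun j => ?_
  simp only [heintzeG_apply, coeff]
  split_ifs <;> fun_prop

lemma gprod_heintzeG (p X Y : Fin (n + 1) → ℝ) :
    gprod (heintzeG a) p X Y = ∑ α, coeff a α (p 0) * X α * Y α := by
  simp [gprod, heintzeG_apply, ite_mul]

lemma pder_heintzeG (i j k : Fin (n + 1)) (p : Fin (n + 1) → ℝ) :
    pder (fun q => heintzeG a q i j) k p =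
      if i = j ∧ k = 0 then 2 * rate a i * coeff a i (p 0) else 0 := by
  by_cases hij : i = j
  · simp only [heintzeG_apply, hij, if_true, coeff]
    simpa [mul_comm] using pder_const_mul_exp (2 * rate a j) 1 0 k p
  · simp [heintzeG_apply, hij, pder]

def Γ (s : ℝ) (l i j : Fin (n + 1)) : ℝ :=
  (if l = j ∧ i = 0 then rate a l else 0) + (if i = l ∧ j = 0 then rate a l else 0) -
    (if i = j ∧ l = 0 then rate a i * coeff a i s else 0)

lemma christoffel_heintzeG (p : Fin (n + 1) → ℝ) (l i j : Fin (n + 1)) :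
    christoffel (heintzeG a) p l i j = Γ a (p 0) l i j := by
  simp only [christoffel, heintzeG_inv, Matrix.diagonal_apply, ite_mul, zero_mul,
    Finset.sum_ite_eq, Finset.mem_univ, if_true, pder_heintzeG, Γ]
  have hl := (coeff_pos a l (p 0)).ne'
  split_ifs <;> grind [rate_zero, coeff_zero]

lemma pder_Γ (p : Fin (n + 1) → ℝ) (l j k i : Fin (n + 1)) :
    pder (fun q : Fin (n + 1) → ℝ => Γ a (q 0) l j k) i p =
      if j = k ∧ l = 0 ∧ i = 0 then -(2 * rate a j ^ 2 * coeff a j (p 0)) else 0 := by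
  by_cases h : j = k ∧ l = 0
  · obtain ⟨rfl, rfl⟩ := h
    have hΓ : (fun q : Fin (n + 1) → ℝ => Γ a (q 0) 0 j j) =
        fun q => -rate a j * Real.exp (2 * rate a j * q 0) := by
      funext q
      simp [Γ, coeff]
    rw [hΓ, pder_const_mul_exp]
    simp only [true_and, coeff]
    split_ifs <;> ring
  · have hΓ : (fun q : Fin (n + 1) → ℝ => Γ a (q 0) l j k) = fun _ => Γ a 0 l j k := by
      funext q
      simp [Γ, h]
    rw [hΓ, if_neg fun h' => h ⟨h'.1, h'.2.1⟩]
    simp [pder]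

lemma sum_Γ_mul_Γ (s : ℝ) (l i j k : Fin (n + 1)) :
    ∑ m, Γ a s l i m * Γ a s m j k =
      (if i = 0 then rate a l * Γ a s l j k else 0) +
        (if i = l then rate a l * Γ a s 0 j k else 0) -
          (if l = 0 then rate a i * coeff a i s * Γ a s i j k else 0) := by
  have h : ∀ m, Γ a s l i m =
      (if l = m then (if i = 0 then rate a l else 0) else 0) +
        (if m = 0 then (if i = l then rate a l else 0) else 0) -
          (if i = m then (if l = 0 then rate a i * coeff a i s else 0) else 0) := by
    intro m
    simp only [Γ, ite_and]
    split_ifs <;> simp_all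
  simp only [h, add_mul, sub_mul, ite_mul, zero_mul, Finset.sum_add_distrib,
    Finset.sum_sub_distrib, Finset.sum_ite_eq, Finset.sum_ite_eq', Finset.mem_univ, if_true]

def curv (α β : Fin (n + 1)) : ℝ :=
  if α = 0 then rate a β ^ 2 else if β = 0 then rate a α ^ 2 else rate a α * rate a β

lemma curv_symm (α β : Fin (n + 1)) : curv a α β = curv a β α := by
  unfold curv
  split_ifs <;> simp_all [mul_comm]

lemma riemann_heintzeG (p : Fin (n + 1) → ℝ) (l k i j : Fin (n + 1)) :
    riemann (heintzeG a) p l k i j =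
      (if j = l ∧ i = k then curv a l i * coeff a i (p 0) else 0) -
        (if i = l ∧ j = k then curv a l j * coeff a j (p 0) else 0) := by
  simp only [riemann, christoffel_heintzeG, pder_Γ, Finset.sum_sub_distrib, sum_Γ_mul_Γ]
  unfold Γ curv
  grind [rate_zero, coeff_zero]

lemma curvVec_heintzeG (p u v w : Fin (n + 1) → ℝ) (l : Fin (n + 1)) :
    curvVec (heintzeG a) p u v w l =
      v l * ∑ β, curv a l β * coeff a β (p 0) * u β * w β -
        u l * ∑ β, curv a l β * coeff a β (p 0) * v β * w β := by
  simp only [curvVec, riemann_heintzeG, mul_sub, Finset.sum_sub_distrib, ite_and, mul_ite,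
    mul_zero, Finset.sum_ite_eq, Finset.sum_ite_eq', Finset.mem_univ, if_true,
    Finset.sum_ite_irrel, Finset.sum_const_zero, Finset.mul_sum]
  congr 1 <;> exact Finset.sum_congr rfl fun _ _ => by ring

def planeWeight (s : ℝ) (u v : Fin (n + 1) → ℝ) (x : Fin (n + 1) × Fin (n + 1)) : ℝ :=
  coeff a x.1 s * coeff a x.2 s * (u x.1 * v x.2 - u x.2 * v x.1) ^ 2

lemma sectional_heintzeG (p u v : Fin (n + 1) → ℝ) :
    sectional (heintzeG a) p u v =
      -((∑ x, curv a x.1 x.2 * planeWeight a (p 0) u v x) / ∑ x, planeWeight a (p 0) u v x) := by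
  set e := fun α => coeff a α (p 0)
  have hnum : gprod (heintzeG a) p (curvVec (heintzeG a) p u v v) u =
      -∑ α, ∑ β, curv a α β * (e α * e β) * (u α ^ 2 * v β ^ 2 - u α * v α * (u β * v β)) := by
    simp only [gprod_heintzeG, curvVec_heintzeG, ← Finset.sum_neg_distrib]
    refine Finset.sum_congr rfl fun α _ => ?_
    simp only [mul_sub, sub_mul, Finset.mul_sum, Finset.sum_mul, ← Finset.sum_sub_distrib]
    exact Finset.sum_congr rfl fun β _ => by ring
  have hden : gprod (heintzeG a) p u u * gprod (heintzeG a) p v v -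
      gprod (heintzeG a) p u v ^ 2 =
        ∑ α, ∑ β, e α * e β * (u α ^ 2 * v β ^ 2 - u α * v α * (u β * v β)) := by
    simp only [gprod_heintzeG, sq, Finset.sum_mul_sum, ← Finset.sum_sub_distrib]
    exact Finset.sum_congr rfl fun α _ => Finset.sum_congr rfl fun β _ => by ring
  have hcurv := sum_sum_mul_sub_sq_eq (fun α β => curv a α β * (e α * e β))
    (fun α β => by rw [curv_symm, mul_comm (e α)]) u v
  have hone := sum_sum_mul_sub_sq_eq (fun α β => e α * e β) (fun α β => mul_comm _ _) u v
  rw [sectional, hnum, hden]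
  simp only [planeWeight, Fintype.sum_prod_type, ← mul_assoc] at hcurv hone ⊢
  rw [hcurv, hone, mul_div_mul_left _ _ two_ne_zero, neg_div]

lemma planeWeight_nonneg (s : ℝ) (u v : Fin (n + 1) → ℝ) (x : Fin (n + 1) × Fin (n + 1)) :
    0 ≤ planeWeight a s u v x :=
  mul_nonneg (mul_pos (coeff_pos a _ s) (coeff_pos a _ s)).le (sq_nonneg _)

lemma sum_planeWeight_pos (s : ℝ) {u v : Fin (n + 1) → ℝ} (h : LinearIndependent ℝ ![u, v]) :
    0 < ∑ x, planeWeight a s u v x := by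
  obtain ⟨α, β, hαβ⟩ := exists_mul_sub_mul_ne_zero h
  refine Finset.sum_pos' (fun x _ => planeWeight_nonneg a s u v x)
    ⟨(α, β), Finset.mem_univ _, ?_⟩
  exact mul_pos (mul_pos (coeff_pos a α s) (coeff_pos a β s)) (pow_two_pos_of_ne_zero hαβ)

variable {a}

lemma curv_mem_Icc (ha : ∀ i, a i ≤ 0) (hs : (Finset.univ : Finset (Fin n)).Nonempty)
    {α β : Fin (n + 1)} (hαβ : α ≠ β) :
    curv a α β ∈ Icc (Finset.univ.inf' hs fun i => a i ^ 2)
      (Finset.univ.sup' hs fun i => a i ^ 2) := by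
  have hsq : ∀ i, a i ^ 2 ∈ Icc (Finset.univ.inf' hs fun i => a i ^ 2)
      (Finset.univ.sup' hs fun i => a i ^ 2) := fun i =>
    ⟨Finset.inf'_le _ (Finset.mem_univ i), Finset.le_sup' (fun i => a i ^ 2) (Finset.mem_univ i)⟩
  induction α using Fin.cases with
  | zero =>
    induction β using Fin.cases with
    | zero => exact absurd rfl hαβ
    | succ j => simpa [curv] using hsq j
  | succ i =>
    induction β using Fin.cases with
    | zero => simpa [curv] using hsq i
    | succ j =>
      simp only [curv, Fin.succ_ne_zero, if_false, rate_succ]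
      obtain ⟨hi₁, hi₂⟩ := hsq i
      obtain ⟨hj₁, hj₂⟩ := hsq j
      constructor <;> rcases le_total (a i) (a j) with h | h <;> nlinarith [ha i, ha j]

theorem sectional_heintzeG_mem_Icc (ha : ∀ i, a i ≤ 0)
    (hs : (Finset.univ : Finset (Fin n)).Nonempty) (p : Fin (n + 1) → ℝ)
    {u v : Fin (n + 1) → ℝ} (h : LinearIndependent ℝ ![u, v]) :
    sectional (heintzeG a) p u v ∈ Icc (-Finset.univ.sup' hs fun i => a i ^ 2)
      (-Finset.univ.inf' hs fun i => a i ^ 2) := by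
  have hmean := div_sum_mem_Icc_of_forall_mem Finset.univ
    (fun x _ => planeWeight_nonneg a (p 0) u v x)
    (fun x _ hx => curv_mem_Icc ha hs fun heq : x.1 = x.2 => hx (by simp [planeWeight, heq]))
    (sum_planeWeight_pos a (p 0) h)
  rw [sectional_heintzeG]
  exact ⟨neg_le_neg hmean.2, neg_le_neg hmean.1⟩

lemma inf'_sq_pos (ha : ∀ i, a i < 0) (hs : (Finset.univ : Finset (Fin n)).Nonempty) :
    0 < Finset.univ.inf' hs fun i => a i ^ 2 :=
  (Finset.lt_inf'_iff _).2 fun i _ => pow_two_pos_of_ne_zero (ha i).ne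

end Curvature

section Completeness

variable {n : ℕ} (a : Fin n → ℝ)

lemma coeff_mul_sq_le_gprod (x X : Fin (n + 1) → ℝ) (α : Fin (n + 1)) :
    coeff a α (x 0) * X α ^ 2 ≤ gprod (heintzeG a) x X X := by
  rw [gprod_heintzeG]
  calc coeff a α (x 0) * X α ^ 2 = coeff a α (x 0) * X α * X α := by ring
    _ ≤ ∑ β, coeff a β (x 0) * X β * X β :=
      Finset.single_le_sum (f := fun β => coeff a β (x 0) * X β * X β)
        (fun β _ => by rw [mul_assoc]; exact mul_nonneg (coeff_pos a β _).le (mul_self_nonneg _))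
        (Finset.mem_univ α)

lemma abs_sub_fst_le_pathLength {c : ℝ → Fin (n + 1) → ℝ} (hc : ContDiff ℝ 1 c)
    {t : ℝ} (ht : t ∈ Icc (0 : ℝ) 1) :
    |c t 0 - c 0 0| ≤ pathLength (heintzeG a) c := by
  simpa using mul_abs_sub_le_pathLength (continuous_heintzeG a) hc zero_le_one 0 (fun τ _ => by
    simpa [Real.sqrt_sq_eq_abs] using
      Real.sqrt_le_sqrt (coeff_mul_sq_le_gprod a (c τ) (deriv c τ) 0)) ht

lemma abs_sub_fst_le_riemDist (p q : Fin (n + 1) → ℝ) :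
    |q 0 - p 0| ≤ riemDist (heintzeG a) p q :=
  le_riemDist _ fun c hc h0 h1 => by
    simpa [h0, h1] using abs_sub_fst_le_pathLength a hc (right_mem_Icc.2 zero_le_one)

variable {a}

lemma coeff_antitone (ha : ∀ i, a i ≤ 0) (α : Fin (n + 1)) : Antitone (coeff a α) := by
  have hrate : rate a α ≤ 0 := by
    induction α using Fin.cases with
    | zero => exact (rate_zero a).le
    | succ j => exact ha j
  intro s t hst
  exact Real.exp_le_exp.2 (by nlinarith)

lemma sqrt_coeff_mul_abs_le_speed (ha : ∀ i, a i ≤ 0) {x : Fin (n + 1) → ℝ} {S : ℝ}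
    (hS : x 0 ≤ S) (X : Fin (n + 1) → ℝ) (α : Fin (n + 1)) :
    Real.sqrt (coeff a α S) * |X α| ≤ Real.sqrt (gprod (heintzeG a) x X X) := by
  rw [← Real.sqrt_sq_eq_abs, ← Real.sqrt_mul (coeff_pos a α S).le]
  exact Real.sqrt_le_sqrt
    ((mul_le_mul_of_nonneg_right (coeff_antitone ha α hS) (sq_nonneg _)).trans
      (coeff_mul_sq_le_gprod a x X α))

lemma sqrt_coeff_mul_abs_sub_le_riemDist (ha : ∀ i, a i ≤ 0) {p q : Fin (n + 1) → ℝ}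
    (h : riemDist (heintzeG a) p q < 1) (α : Fin (n + 1)) :
    Real.sqrt (coeff a α (p 0 + 1)) * |q α - p α| ≤ riemDist (heintzeG a) p q := by
  refine le_of_forall_gt_imp_ge_of_dense fun L hL => ?_
  obtain ⟨c, hc, h0, h1, hlen⟩ := exists_pathLength_lt _ (lt_min hL h)
  have hfst : ∀ τ ∈ Icc (0 : ℝ) 1, c τ 0 ≤ p 0 + 1 := fun τ hτ => by
    have := (abs_le.1 (abs_sub_fst_le_pathLength a hc hτ)).2
    rw [h0] at this
    linarith [min_le_right L 1]
  have := mul_abs_sub_le_pathLength (continuous_heintzeG a) hc (Real.sqrt_nonneg _) α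
    (fun τ hτ => sqrt_coeff_mul_abs_le_speed ha (hfst τ hτ) _ α) (right_mem_Icc.2 zero_le_one)
  rw [h0, h1] at this
  linarith [min_le_left L 1]

lemma riemDist_heintzeG_le (ha : ∀ i, a i ≤ 0) {p q : Fin (n + 1) → ℝ} {s : ℝ}
    (hp : s ≤ p 0) (hq : s ≤ q 0) :
    riemDist (heintzeG a) p q ≤ Real.sqrt (∑ α, coeff a α s * (q α - p α) ^ 2) := by
  refine riemDist_le_of_segment (continuous_heintzeG a) fun t ht => Real.sqrt_le_sqrt ?_
  rw [gprod_heintzeG]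
  refine Finset.sum_le_sum fun α _ => ?_
  have hs : s ≤ (p + t • (q - p)) 0 := by
    simp only [Pi.add_apply, Pi.smul_apply, Pi.sub_apply, smul_eq_mul]
    nlinarith [ht.1, ht.2]
  simpa [mul_assoc, sq] using
    mul_le_mul_of_nonneg_right (coeff_antitone ha α hs) (mul_self_nonneg (q α - p α))

lemma cauchySeq_apply (ha : ∀ i, a i ≤ 0) {u : ℕ → Fin (n + 1) → ℝ}
    (hu : ∀ ε > (0 : ℝ), ∃ N, ∀ k ≥ N, ∀ m ≥ N, riemDist (heintzeG a) (u k) (u m) < ε)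
    (α : Fin (n + 1)) : CauchySeq fun k => u k α := by
  have hfst : CauchySeq fun k => u k 0 := Metric.cauchySeq_iff.2 fun ε hε => by
    obtain ⟨N, hN⟩ := hu ε hε
    refine ⟨N, fun m hm k hk => ?_⟩
    rw [Real.dist_eq, abs_sub_comm]
    exact (abs_sub_fst_le_riemDist a _ _).trans_lt (hN m hm k hk)
  obtain ⟨S, hS⟩ := hfst.isBounded_range.bddAbove
  set κ := Real.sqrt (coeff a α (S + 1))
  have hκ : 0 < κ := Real.sqrt_pos.2 (coeff_pos a α _)
  refine Metric.cauchySeq_iff.2 fun ε hε => ?_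
  obtain ⟨N, hN⟩ := hu (min 1 (κ * ε)) (lt_min one_pos (mul_pos hκ hε))
  refine ⟨N, fun m hm k hk => ?_⟩
  have hd := hN k hk m hm
  have hκk : κ ≤ Real.sqrt (coeff a α (u k 0 + 1)) :=
    Real.sqrt_le_sqrt (coeff_antitone ha α (by linarith [hS ⟨k, rfl⟩]))
  have hmul : κ * |u m α - u k α| < κ * ε :=
    calc κ * |u m α - u k α| ≤ Real.sqrt (coeff a α (u k 0 + 1)) * |u m α - u k α| :=
          mul_le_mul_of_nonneg_right hκk (abs_nonneg _)
      _ ≤ riemDist (heintzeG a) (u k) (u m) :=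
          sqrt_coeff_mul_abs_sub_le_riemDist ha (hd.trans_le (min_le_left _ _)) α
      _ < κ * ε := hd.trans_le (min_le_right _ _)
  rw [Real.dist_eq]
  exact lt_of_mul_lt_mul_left hmul hκ.le

lemma tendsto_riemDist_of_tendsto (ha : ∀ i, a i ≤ 0) {u : ℕ → Fin (n + 1) → ℝ}
    {p : Fin (n + 1) → ℝ} (hu : Tendsto u atTop (𝓝 p)) :
    Tendsto (fun k => riemDist (heintzeG a) (u k) p) atTop (𝓝 0) := by
  have hbound : Tendsto (fun k => Real.sqrt (∑ α, coeff a α (p 0 - 1) * (p α - u k α) ^ 2))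
      atTop (𝓝 0) := by
    have hcont : Continuous fun x : Fin (n + 1) → ℝ =>
        Real.sqrt (∑ α, coeff a α (p 0 - 1) * (p α - x α) ^ 2) := by
      fun_prop
    simpa [Function.comp_def] using (hcont.tendsto p).comp hu
  have hfst : ∀ᶠ k in atTop, p 0 - 1 < u k 0 :=
    (tendsto_pi_nhds.1 hu 0).eventually_const_lt (sub_one_lt _)
  refine tendsto_of_tendsto_of_tendsto_of_le_of_le' tendsto_const_nhds hbound
    (Eventually.of_forall fun k => riemDist_nonneg _ _ _) ?_
  filter_upwards [hfst] with k hk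
  exact riemDist_heintzeG_le ha hk.le (sub_one_lt _).le

theorem complete (ha : ∀ i, a i ≤ 0) (u : ℕ → Fin (n + 1) → ℝ)
    (hu : ∀ ε > (0 : ℝ), ∃ N, ∀ k ≥ N, ∀ m ≥ N, riemDist (heintzeG a) (u k) (u m) < ε) :
    ∃ p, Tendsto (fun k => riemDist (heintzeG a) (u k) p) atTop (𝓝 0) := by
  choose p hp using fun α => cauchySeq_tendsto_of_complete (cauchySeq_apply ha hu α)
  exact ⟨p, tendsto_riemDist_of_tendsto ha (tendsto_pi_nhds.2 hp)⟩

end Completeness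

end Heintze

theorem statement7_general {n : ℕ} (hn : 0 < n) (a : Fin n → ℝ)
    (hneg : ∀ i, a i < 0) :
    -- completeness (of the Riemannian distance of `g`)
    (∀ u : ℕ → Fin (n + 1) → ℝ,
      (∀ ε > (0:ℝ), ∃ N, ∀ k ≥ N, ∀ m ≥ N,
        riemDist (heintzeG a) (u k) (u m) < ε) →
      ∃ p, Tendsto (fun k => riemDist (heintzeG a) (u k) p) atTop (nhds 0)) ∧
    -- simple connectedness
    SimplyConnectedSpace (Fin (n + 1) → ℝ) ∧
    -- curvature pinching `-(maxᵢ aᵢ²) ≤ K ≤ -(minᵢ aᵢ²) < 0`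
    (∀ (p u v : Fin (n + 1) → ℝ), LinearIndependent ℝ ![u, v] →
      -(Finset.univ.sup' ⟨⟨0, hn⟩, Finset.mem_univ _⟩ fun i => a i ^ 2) ≤
          sectional (heintzeG a) p u v ∧
      sectional (heintzeG a) p u v ≤
          -(Finset.univ.inf' ⟨⟨0, hn⟩, Finset.mem_univ _⟩ fun i => a i ^ 2) ∧
      sectional (heintzeG a) p u v < 0) := by
  have ha : ∀ i, a i ≤ 0 := fun i => (hneg i).le
  refine ⟨Heintze.complete ha, inferInstance, fun p u v huv => ?_⟩
  obtain ⟨hlower, hupper⟩ := Heintze.sectional_heintzeG_mem_Icc ha _ p huv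
  exact ⟨hlower, hupper, hupper.trans_lt (neg_neg_of_pos (Heintze.inf'_sq_pos hneg _))⟩

/-- Let `a₁ ≤ a₂ ≤ ⋯ ≤ aₙ < 0` and consider on
`ℝ^{n+1} = ℝ × ℝⁿ` the Riemannian metric
`g = ds² + e^{2a₁s}|dy₁|² + ⋯ + e^{2aₙs}|dyₙ|²`.  Then `(ℝ^{n+1}, g)` is a
Cartan–Hadamard manifold — complete, simply connected, (indeed negatively
curved) — whose sectional curvature `K` is pinched between `-(maxᵢ aᵢ²)` and
`-(minᵢ aᵢ²)`; in particular it has strictly negative sectional curvature. -/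
theorem statement7 {n : ℕ} (hn : 0 < n) (a : Fin n → ℝ)
    (hmono : Monotone a) (hneg : ∀ i, a i < 0) :
    -- completeness (of the Riemannian distance of `g`)
    (∀ u : ℕ → Fin (n + 1) → ℝ,
      (∀ ε > (0:ℝ), ∃ N, ∀ k ≥ N, ∀ m ≥ N,
        riemDist (heintzeG a) (u k) (u m) < ε) →
      ∃ p, Tendsto (fun k => riemDist (heintzeG a) (u k) p) atTop (nhds 0)) ∧
    -- simple connectedness
    SimplyConnectedSpace (Fin (n + 1) → ℝ) ∧
    -- curvature pinching `-(maxᵢ aᵢ²) ≤ K ≤ -(minᵢ aᵢ²) < 0`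
    (∀ (p u v : Fin (n + 1) → ℝ), LinearIndependent ℝ ![u, v] →
      -(Finset.univ.sup' ⟨⟨0, hn⟩, Finset.mem_univ _⟩ fun i => a i ^ 2) ≤
          sectional (heintzeG a) p u v ∧
      sectional (heintzeG a) p u v ≤
          -(Finset.univ.inf' ⟨⟨0, hn⟩, Finset.mem_univ _⟩ fun i => a i ^ 2) ∧
      sectional (heintzeG a) p u v < 0) :=
  statement7_general hn a hneg
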